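/- Let g : ℝⁿ → (−∞,+∞] have g(x̄) finite, let w be such that dg(x̄)(w) is finite, and let v satisfy dg(x̄)(w) = ⟨v,w⟩. Then the second subderivative and the parabolic subderivative satisfy d²g(x̄ | v)(w) ≤ inf_z { d²g(x̄)(w | z) − ⟨v, z⟩ }. -/

import Mathlib

open Filter Topology Matrix

noncomputable section

abbrev Mat (m n : ℕ) := Matrix (Fin m) (Fin n) ℝ

namespace Paper

/-- Frobenius (trace) inner product on real matrices. -/
def finner {m n : ℕ} (X Y : Mat m n) : ℝ := ∑ i, ∑ j, X i j * Y i j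

/-- Frobenius norm. -/
def fnorm {m n : ℕ} (X : Mat m n) : ℝ := Real.sqrt (finner X X)

/-- Euclidean inner product on `ℝⁿ`. -/
def vinner {n : ℕ} (x y : Fin n → ℝ) : ℝ := ∑ i, x i * y i

/-- Euclidean norm on `ℝⁿ`. -/
def vnorm {n : ℕ} (x : Fin n → ℝ) : ℝ := Real.sqrt (vinner x x)

/-- Eigenvalues of a real symmetric matrix, arranged in nonincreasing order. -/
def eigs {k : ℕ} (A : Matrix (Fin k) (Fin k) ℝ) (hA : A.IsHermitian) : Fin k → ℝ :=
  fun i => hA.eigenvalues (Tuple.sort (fun j => -(hA.eigenvalues j)) i)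

/-- Singular values of a real `m × n` matrix, arranged in nonincreasing order. -/
def svals {m n : ℕ} (X : Mat m n) : Fin n → ℝ :=
  fun i => Real.sqrt (eigs _ (by simpa using Matrix.isHermitian_conjTranspose_mul_self X : (Xᵀ * X).IsHermitian) i)

/-- The `m × n` matrix with `x` on the diagonal and zeros elsewhere. -/
def mdiag {m n : ℕ} (x : Fin n → ℝ) : Mat m n :=
  fun i j => if (i : ℕ) = (j : ℕ) then x j else 0

/-- The symmetric block matrix `B(X) = [[0, X], [Xᵀ, 0]]`, reindexed over `Fin (m+n)`. -/
def bmat {m n : ℕ} (X : Mat m n) : Matrix (Fin (m + n)) (Fin (m + n)) ℝ :=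
  Matrix.reindex finSumFinEquiv finSumFinEquiv (Matrix.fromBlocks 0 X Xᵀ 0)

lemma bmat_isHermitian {m n : ℕ} (X : Mat m n) : (bmat X).IsHermitian := by
  rw [Matrix.IsHermitian]
  ext i j
  simp only [bmat, Matrix.conjTranspose_apply, Matrix.reindex_apply, Matrix.submatrix_apply,
    star_trivial]
  rcases hi : finSumFinEquiv.symm i with a | a <;> rcases hj : finSumFinEquiv.symm j with b | b <;>
    simp [Matrix.fromBlocks, Matrix.transpose_apply]

/-- Eigenvalues of `B(X)` in nonincreasing order. -/
def beigs {m n : ℕ} (X : Mat m n) : Fin (m + n) → ℝ :=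
  eigs (bmat X) (bmat_isHermitian X)

/-- `Q` is a signed permutation matrix. -/
def IsSignedPerm {n : ℕ} (Q : Matrix (Fin n) (Fin n) ℝ) : Prop :=
  ∃ (e : Equiv.Perm (Fin n)) (s : Fin n → ℝ), (∀ i, s i = 1 ∨ s i = -1) ∧
    ∀ i j, Q i j = if j = e i then s i else 0

/-- A set of vectors invariant under all signed permutations. -/
def AbsSymSet {n : ℕ} (K : Set (Fin n → ℝ)) : Prop :=
  ∀ Q, IsSignedPerm Q → ∀ x ∈ K, Q.mulVec x ∈ K

/-- An extended-real-valued absolutely symmetric function. -/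
def AbsSymFun {n : ℕ} (f : (Fin n → ℝ) → EReal) : Prop :=
  ∀ Q, IsSignedPerm Q → ∀ x, f (Q.mulVec x) = f x

/-- Euclidean distance from a point to a set in `ℝⁿ`. -/
def vdist {n : ℕ} (x : Fin n → ℝ) (K : Set (Fin n → ℝ)) : ℝ :=
  sInf ((fun y => vnorm (x - y)) '' K)

/-- Frobenius distance from a matrix to a set of matrices. -/
def mdist {m n : ℕ} (X : Mat m n) (Γ : Set (Mat m n)) : ℝ :=
  sInf ((fun Y => fnorm (X - Y)) '' Γ)

section Variational

variable {E : Type*} [AddCommGroup E] [Module ℝ E] [TopologicalSpace E]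

/-- The subderivative `dg(x)(w) = liminf_{t↓0, w'→w} (g(x+tw') - g(x))/t`. -/
def subderiv (g : E → EReal) (x w : E) : EReal :=
  liminf (fun p : ℝ × E => ((p.1⁻¹ : ℝ) : EReal) * (g (x + p.1 • p.2) - g x))
    ((𝓝[>] (0 : ℝ)) ×ˢ 𝓝 w)

/-- The second-order difference quotient `Δ²_τ g(x | v)(w)`. -/
def secondQuot (ip : E → E → ℝ) (g : E → EReal) (x v : E) (τ : ℝ) (w : E) : EReal :=
  ((2 / τ ^ 2 : ℝ) : EReal) * (g (x + τ • w) - g x - ((τ * ip v w : ℝ) : EReal))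

/-- The second subderivative `d²g(x | v)(w)`. -/
def secondSubderiv (ip : E → E → ℝ) (g : E → EReal) (x v w : E) : EReal :=
  liminf (fun p : ℝ × E => secondQuot ip g x v p.1 p.2) ((𝓝[>] (0 : ℝ)) ×ˢ 𝓝 w)

/-- The parabolic difference quotient `Δ²_τ g(x)(w | z)`. -/
def parabQuot (g : E → EReal) (x w : E) (τ : ℝ) (z : E) : EReal :=
  ((2 / τ ^ 2 : ℝ) : EReal) *
    (g (x + τ • w + (τ ^ 2 / 2) • z) - g x - ((τ : ℝ) : EReal) * subderiv g x w)

/-- The parabolic subderivative `d²g(x)(w | z)`. -/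
def parabolicSubderiv (g : E → EReal) (x w z : E) : EReal :=
  liminf (fun p : ℝ × E => parabQuot g x w p.1 p.2) ((𝓝[>] (0 : ℝ)) ×ˢ 𝓝 z)

/-- Parabolic epi-differentiability of `g` at `x` for `w`. -/
def ParabEpiDiffAt (g : E → EReal) (x w : E) : Prop :=
  (∃ z, parabolicSubderiv g x w z < ⊤) ∧
  ∀ z : E, ∀ t : ℕ → ℝ, (∀ k, 0 < t k) → Tendsto t atTop (𝓝 0) →
    ∃ zk : ℕ → E, Tendsto zk atTop (𝓝 z) ∧
      Tendsto (fun k => parabQuot g x w (t k) (zk k)) atTop (𝓝 (parabolicSubderiv g x w z))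

/-- The (contingent) tangent cone to `C` at `x`. -/
def tangentConeOf (C : Set E) (x : E) : Set E :=
  {w | ∃ t : ℕ → ℝ, ∃ w' : ℕ → E, (∀ k, 0 < t k) ∧ Tendsto t atTop (𝓝 0) ∧
    Tendsto w' atTop (𝓝 w) ∧ ∀ k, x + t k • w' k ∈ C}

/-- The second-order tangent set to `C` at `x` for `w`. -/
def tangentCone2Of (C : Set E) (x w : E) : Set E :=
  {u | ∃ t : ℕ → ℝ, ∃ u' : ℕ → E, (∀ k, 0 < t k) ∧ Tendsto t atTop (𝓝 0) ∧
    Tendsto u' atTop (𝓝 u) ∧ ∀ k, x + t k • w + (t k ^ 2 / 2) • u' k ∈ C}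

/-- Parabolic derivability of the set `C` at `x` for `w`. -/
def ParabolicallyDerivable (C : Set E) (x w : E) : Prop :=
  (tangentCone2Of C x w).Nonempty ∧
  ∀ u ∈ tangentCone2Of C x w, ∃ ε > (0 : ℝ), ∃ ξ : ℝ → E,
    (∀ t ∈ Set.Icc (0 : ℝ) ε, ξ t ∈ C) ∧ ξ 0 = x ∧
    Tendsto (fun t : ℝ => t⁻¹ • (ξ t - x)) (𝓝[>] 0) (𝓝 w) ∧
    Tendsto (fun t : ℝ => (2 / t ^ 2) • (ξ t - x - t • w)) (𝓝[>] 0) (𝓝 u)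

/-- The convex subdifferential of `g` at `x` (w.r.t. the pairing `ip`). -/
def convSubdiff (ip : E → E → ℝ) (g : E → EReal) (x : E) : Set E :=
  {v | ∀ y, ((ip v (y - x) : ℝ) : EReal) + g x ≤ g y}

/-- Convexity for extended-real-valued functions. -/
def ConvexEReal (g : E → EReal) : Prop :=
  ∀ x y : E, ∀ t : ℝ, 0 ≤ t → t ≤ 1 →
    g (t • x + (1 - t) • y) ≤ ((t : ℝ) : EReal) * g x + ((1 - t : ℝ) : EReal) * g y

end Variational

/-- Local Lipschitz continuity of `f` relative to its domain (everywhere on the domain). -/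
def LocLipRelDom {n : ℕ} (f : (Fin n → ℝ) → EReal) : Prop :=
  ∀ x, f x ≠ ⊤ → ∃ l ≥ (0 : ℝ), ∃ U ∈ 𝓝 x, ∀ y ∈ U, ∀ z ∈ U, f y ≠ ⊤ → f z ≠ ⊤ →
    |(f y).toReal - (f z).toReal| ≤ l * vnorm (y - z)

/-- The columns of `U` with indices `r, r+1, …, k-1`. -/
def colsFrom {k : ℕ} (r : ℕ) (U : Matrix (Fin k) (Fin k) ℝ) :
    Matrix (Fin k) (Fin (k - r)) ℝ :=
  fun i j => U i ⟨r + (j : ℕ), by have := j.isLt; omega⟩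

/-- The first `r` columns of `U`. -/
def firstCols {k : ℕ} (r : ℕ) (h : r ≤ k) (U : Matrix (Fin k) (Fin k) ℝ) :
    Matrix (Fin k) (Fin r) ℝ :=
  fun i j => U i (Fin.castLE h j)

/-- The submatrix of `M` with rows `a ≤ · < b` and columns `c ≤ · < d`. -/
def subBlock {p q : ℕ} (M : Matrix (Fin p) (Fin q) ℝ) (a b c d : ℕ)
    (h1 : b ≤ p) (h2 : d ≤ q) : Matrix (Fin (b - a)) (Fin (d - c)) ℝ :=
  fun i j => M ⟨a + (i : ℕ), by have := i.isLt; omega⟩ ⟨c + (j : ℕ), by have := j.isLt; omega⟩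

/-- Nuclear norm: the sum of all singular values. -/
def nucNorm {m n : ℕ} (A : Mat m n) : ℝ := ∑ j, svals A j

/-- `Ψₙ(X) = σ_{r+1}(X) + ⋯ + σ_n(X)`, the sum of the `n - r` smallest singular values. -/
def psiN {m n : ℕ} (r : ℕ) (X : Mat m n) : ℝ :=
  ∑ s : Fin n, if r ≤ (s : ℕ) then svals X s else 0

/-- The regular (Fréchet) subdifferential of a real-valued function on matrices. -/
def regSubdiff {m n : ℕ} (g : Mat m n → ℝ) (X : Mat m n) : Set (Mat m n) :=
  {V | ∀ ε > (0 : ℝ), ∀ᶠ Y in 𝓝 X, g X + finner V (Y - X) - ε * fnorm (Y - X) ≤ g Y}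

/-- Two square matrices admit a simultaneous ordered spectral decomposition. -/
def SimSpec {k : ℕ} (A B : Matrix (Fin k) (Fin k) ℝ) : Prop :=
  ∃ (W : Matrix (Fin k) (Fin k) ℝ) (a b : Fin k → ℝ), Wᵀ * W = 1 ∧
    Antitone a ∧ Antitone b ∧
    A = W * Matrix.diagonal a * Wᵀ ∧ B = W * Matrix.diagonal b * Wᵀ

/-- Two rectangular matrices admit a simultaneous ordered singular value decomposition. -/
def SimSVD {p q : ℕ} (A B : Matrix (Fin p) (Fin q) ℝ) : Prop :=
  ∃ (U : Matrix (Fin p) (Fin p) ℝ) (V : Matrix (Fin q) (Fin q) ℝ)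
    (a b : Fin q → ℝ), Uᵀ * U = 1 ∧ Vᵀ * V = 1 ∧
    Antitone a ∧ Antitone b ∧ (∀ j, 0 ≤ a j) ∧ (∀ j, 0 ≤ b j) ∧
    A = U * (mdiag a : Mat p q) * Vᵀ ∧ B = U * (mdiag b : Mat p q) * Vᵀ

end Paper

open Paper

/-!
Substituting `w' = w + (τ/2) z'` into the second-order difference quotient turns it into the
parabolic difference quotient at `(τ, z')` minus `⟨v, z'⟩`, because the first-order term
`τ dg(x̄)(w)` equals `τ ⟨v, w⟩`. As `z' → z` we have `w' → w`, so the liminf defining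
`d²g(x̄ | v)(w)` runs over a larger family of quotients than the one defining
`d²g(x̄)(w | z) − ⟨v, z⟩`.
-/

lemma EReal.coe_mul_sub_coe_add (A : EReal) (c p q : ℝ) (hc : 0 < c) :
    (c : EReal) * (A - ((p + q : ℝ) : EReal)) = c * (A - p) - ((c * q : ℝ) : EReal) := by
  induction A using EReal.rec with
  | bot => simp only [EReal.bot_sub, EReal.coe_mul_bot_of_pos hc]
  | top => simp only [EReal.top_sub_coe, EReal.coe_mul_top_of_pos hc]
  | coe a =>
    norm_cast
    ring

lemma EReal.liminf_sub_coe_le {α : Type*} {F : Filter α} [F.NeBot] (a : α → EReal) (c : α → ℝ)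
    {r : ℝ} (hc : Tendsto c F (𝓝 r)) :
    liminf (fun p => a p - c p) F ≤ liminf a F - r := by
  have hlim : liminf (fun p => (c p : EReal)) F = r :=
    (continuous_coe_real_ereal.tendsto r |>.comp hc).liminf_eq
  rw [EReal.le_sub_iff_add_le (Or.inl (EReal.coe_ne_bot r)) (Or.inl (EReal.coe_ne_top r)),
    ← hlim]
  refine EReal.le_liminf_add.trans_eq (liminf_congr <| Eventually.of_forall fun p => ?_)
  exact EReal.sub_add_cancel

namespace Paper

section Variational

variable {E : Type*} [AddCommGroup E] [Module ℝ E] [TopologicalSpace E]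

lemma tendsto_parabolic_reparam [ContinuousAdd E] [ContinuousSMul ℝ E] (w z : E) :
    Tendsto (fun p : ℝ × E => (p.1, w + (p.1 / 2) • p.2))
      ((𝓝[>] (0 : ℝ)) ×ˢ 𝓝 z) ((𝓝[>] (0 : ℝ)) ×ˢ 𝓝 w) := by
  refine tendsto_fst.prodMk ?_
  have hτ : Tendsto (fun p : ℝ × E => p.1) ((𝓝[>] (0 : ℝ)) ×ˢ 𝓝 z) (𝓝 0) :=
    tendsto_fst.mono_right nhdsWithin_le_nhds
  simpa using tendsto_const_nhds.add ((hτ.div_const 2).smul tendsto_snd)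

lemma secondQuot_add_smul_eq_parabQuot_sub (ip : E → E → ℝ) (g : E → EReal) (x w v z : E)
    (hv : IsLinearMap ℝ (ip v)) (hw : subderiv g x w = ip v w) {τ : ℝ} (hτ : 0 < τ) :
    secondQuot ip g x v τ (w + (τ / 2) • z) = parabQuot g x w τ z - ip v z := by
  have harg : x + τ • (w + (τ / 2) • z) = x + τ • w + (τ ^ 2 / 2) • z := by
    rw [smul_add, smul_smul, ← add_assoc, sq, mul_div_assoc]
  have hquot : 2 / τ ^ 2 * (τ * ((τ / 2) * ip v z)) = ip v z := by
    field_simp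
  rw [secondQuot, parabQuot, harg, hw, hv.map_add, hv.map_smul, smul_eq_mul, mul_add,
    ← EReal.coe_mul, EReal.coe_mul_sub_coe_add _ _ _ _ (by positivity), hquot]

theorem secondSubderiv_le_parabolicSubderiv_sub [ContinuousAdd E] [ContinuousSMul ℝ E]
    (ip : E → E → ℝ) (g : E → EReal) (x w v z : E) (hv : IsLinearMap ℝ (ip v))
    (hv_cont : Continuous (ip v)) (hw : subderiv g x w = ip v w) :
    secondSubderiv ip g x v w ≤ parabolicSubderiv g x w z - ip v z := by
  set F : Filter (ℝ × E) := (𝓝[>] (0 : ℝ)) ×ˢ 𝓝 z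
  have hquot : ∀ᶠ p in F, secondQuot ip g x v p.1 (w + (p.1 / 2) • p.2) =
      parabQuot g x w p.1 p.2 - ip v p.2 := by
    filter_upwards [eventually_mem_nhdsWithin.prod_inl _] with p hp
    exact secondQuot_add_smul_eq_parabQuot_sub ip g x w v p.2 hv hw hp
  calc secondSubderiv ip g x v w
      ≤ liminf (fun p : ℝ × E => secondQuot ip g x v p.1 (w + (p.1 / 2) • p.2)) F :=
        (tendsto_parabolic_reparam w z).liminf_le_liminf_comp
    _ = liminf (fun p : ℝ × E => parabQuot g x w p.1 p.2 - ip v p.2) F := liminf_congr hquot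
    _ ≤ parabolicSubderiv g x w z - ip v z :=
        EReal.liminf_sub_coe_le _ _ ((hv_cont.tendsto z).comp tendsto_snd)

end Variational

end Paper

theorem stmt11_general {n : ℕ} (g : (Fin n → ℝ) → EReal) (x w v : Fin n → ℝ)
    (hw : subderiv g x w = ((vinner v w : ℝ) : EReal)) :
    ∀ z : Fin n → ℝ, secondSubderiv vinner g x v w ≤
      parabolicSubderiv g x w z - ((vinner v z : ℝ) : EReal) := fun z =>
  secondSubderiv_le_parabolicSubderiv_sub vinner g x w v z
    ⟨fun a b => dotProduct_add v a b, fun c a => dotProduct_smul c v a⟩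
    (continuous_const.dotProduct continuous_id) hw

/-- The second subderivative is bounded above by the parabolic subderivative:
if `dg(x̄)(w) = ⟨v,w⟩` (finite), then `d²g(x̄|v)(w) ≤ inf_z {d²g(x̄)(w|z) − ⟨v,z⟩}`. -/
theorem stmt11 {n : ℕ} (g : (Fin n → ℝ) → EReal) (x w v : Fin n → ℝ)
    (hx : g x ≠ ⊤ ∧ g x ≠ ⊥)
    (hw : subderiv g x w = ((vinner v w : ℝ) : EReal)) :
    ∀ z : Fin n → ℝ, secondSubderiv vinner g x v w ≤
      parabolicSubderiv g x w z - ((vinner v z : ℝ) : EReal) :=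
  stmt11_general g x w v hw
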